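/- arXiv:1603.04551 — 2 statements merged into one kernel-verified Lean document; each statement's English description precedes it below -/
import Mathlib

section
/- Define, on the open set {(x,y,z) ∈ ℝ³ : x > 0}, the map Φ(x,y,z) = (C, χ, z) with C = (x² + y² + z²)/2 and χ = e^{−z²/2} arctan(y/x). Then Φ is differentiable and the determinant of its Jacobian matrix equals e^{−z²/2} at every point of this set. (Hence dC ∧ dχ ∧ dz = e^{−z²/2} dx ∧ dy ∧ dz, identifying the invariant measure of the flow v = e^{z²/2} ∇C × ∇H.) -/
/-!
The last row of the Jacobian of `Φ = (C, χ, z)` is `(0, 0, 1)`, so its determinant is the minor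
`x ∂_y χ − y ∂_x χ`. The first row is `∇C = (x, y, z)` and the gradient of the polar angle
`arctan (y / x)` is `(−y, x) / (x² + y²)`, so this minor is `e^{−z²/2} (x² + y²) / (x² + y²)`.
-/

open Matrix

/-- The coordinate change `Φ(x, y, z) = (C, χ, z)` with `C = (x² + y² + z²)/2`
and `χ = e^{−z²/2} arctan(y/x)`, on points `p = (p 0, p 1, p 2)` of `ℝ³`. -/
noncomputable def Phi (p : Fin 3 → ℝ) : Fin 3 → ℝ :=
  ![(p 0 ^ 2 + p 1 ^ 2 + p 2 ^ 2) / 2,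
    Real.exp (-(p 2) ^ 2 / 2) * Real.arctan (p 1 / p 0),
    p 2]

open Real Function

theorem fderiv_apply_single_eq_of_hasDerivAt {𝕜 ι F : Type*} [NontriviallyNormedField 𝕜]
    [Fintype ι] [DecidableEq ι] [NormedAddCommGroup F] [NormedSpace 𝕜 F]
    {f : (ι → 𝕜) → F} {p : ι → 𝕜} {j : ι} {a : F} (hf : DifferentiableAt 𝕜 f p)
    (h : HasDerivAt (fun t => f (update p j t)) a (p j)) :
    fderiv 𝕜 f p (Pi.single j 1) = a := by
  have hf' : HasFDerivAt f (fderiv 𝕜 f p) (update p j (p j)) := by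
    rw [update_eq_self]
    exact hf.hasFDerivAt
  exact (hf'.comp_hasDerivAt (p j) (hasDerivAt_update p j (p j))).unique h

theorem Matrix.det_fin_three_of_row_two_eq {R : Type*} [CommRing R]
    (M : Matrix (Fin 3) (Fin 3) R) (h : M 2 = ![0, 0, 1]) :
    M.det = M 0 0 * M 1 1 - M 0 1 * M 1 0 := by
  simp [det_fin_three, h]

theorem Real.hasDerivAt_arctan_const_div {x : ℝ} (y : ℝ) (hx : x ≠ 0) :
    HasDerivAt (fun t => arctan (y / t)) (-y / (x ^ 2 + y ^ 2)) x := by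
  have h := ((hasDerivAt_inv hx).const_mul y).arctan
  simp only [← div_eq_mul_inv] at h
  convert h using 1
  rw [show 1 + (y / x) ^ 2 = (x ^ 2 + y ^ 2) / x ^ 2 by field_simp]
  field_simp

theorem Real.hasDerivAt_arctan_div_const {x : ℝ} (y : ℝ) (hx : x ≠ 0) :
    HasDerivAt (fun t => arctan (t / x)) (x / (x ^ 2 + y ^ 2)) y := by
  convert ((hasDerivAt_id' y).div_const x).arctan using 1
  rw [show 1 + (y / x) ^ 2 = (x ^ 2 + y ^ 2) / x ^ 2 by field_simp]
  field_simp

namespace Phi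

variable (q : Fin 3 → ℝ)

@[simp] theorem apply_zero : Phi q 0 = (q 0 ^ 2 + q 1 ^ 2 + q 2 ^ 2) / 2 := rfl

@[simp] theorem apply_one : Phi q 1 = exp (-(q 2) ^ 2 / 2) * arctan (q 1 / q 0) := rfl

@[simp] theorem apply_two : Phi q 2 = q 2 := rfl

variable {p : Fin 3 → ℝ}

theorem differentiableAt_apply_zero : DifferentiableAt ℝ (fun q => Phi q 0) p := by
  simp only [apply_zero]
  fun_prop

theorem differentiableAt_apply_one (hx : p 0 ≠ 0) :
    DifferentiableAt ℝ (fun q => Phi q 1) p := by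
  simp only [apply_one]
  have hdiv : DifferentiableAt ℝ (fun q : Fin 3 → ℝ => q 1 / q 0) p := by
    fun_prop (disch := exact hx)
  exact (by fun_prop : DifferentiableAt ℝ (fun q : Fin 3 → ℝ => exp (-(q 2) ^ 2 / 2)) p).mul
    hdiv.arctan

theorem differentiableAt_apply_two : DifferentiableAt ℝ (fun q => Phi q 2) p := by
  simp only [apply_two]
  fun_prop

theorem differentiableAt (hx : p 0 ≠ 0) : DifferentiableAt ℝ Phi p := by
  refine differentiableAt_pi.2 fun i => ?_
  fin_cases i
  exacts [differentiableAt_apply_zero, differentiableAt_apply_one hx, differentiableAt_apply_two]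

theorem fderiv_apply_zero_single_zero :
    fderiv ℝ (fun q => Phi q 0) p (Pi.single 0 1) = p 0 := by
  refine fderiv_apply_single_eq_of_hasDerivAt differentiableAt_apply_zero ?_
  simpa using (((hasDerivAt_pow 2 (p 0)).add_const _).add_const _).div_const 2

theorem fderiv_apply_zero_single_one :
    fderiv ℝ (fun q => Phi q 0) p (Pi.single 1 1) = p 1 := by
  refine fderiv_apply_single_eq_of_hasDerivAt differentiableAt_apply_zero ?_
  simpa using (((hasDerivAt_pow 2 (p 1)).const_add _).add_const _).div_const 2

theorem fderiv_apply_one_single_zero (hx : p 0 ≠ 0) :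
    fderiv ℝ (fun q => Phi q 1) p (Pi.single 0 1) =
      exp (-(p 2) ^ 2 / 2) * (-p 1 / (p 0 ^ 2 + p 1 ^ 2)) := by
  refine fderiv_apply_single_eq_of_hasDerivAt (differentiableAt_apply_one hx) ?_
  simpa using (hasDerivAt_arctan_const_div (p 1) hx).const_mul (exp (-(p 2) ^ 2 / 2))

theorem fderiv_apply_one_single_one (hx : p 0 ≠ 0) :
    fderiv ℝ (fun q => Phi q 1) p (Pi.single 1 1) =
      exp (-(p 2) ^ 2 / 2) * (p 0 / (p 0 ^ 2 + p 1 ^ 2)) := by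
  refine fderiv_apply_single_eq_of_hasDerivAt (differentiableAt_apply_one hx) ?_
  simpa using (hasDerivAt_arctan_div_const (p 1) hx).const_mul (exp (-(p 2) ^ 2 / 2))

theorem fderiv_apply_two_single (j : Fin 3) :
    fderiv ℝ (fun q => Phi q 2) p (Pi.single j 1) = ![0, 0, 1] j := by
  simp only [apply_two]
  rw [fderiv_apply differentiableAt_id, fderiv_fun_id]
  fin_cases j <;> simp

end Phi

/-- On the open set `{x > 0}`, the map `Φ = (C, χ, z)` is differentiable and the
determinant of its Jacobian matrix equals `e^{−z²/2}`; hence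
`dC ∧ dχ ∧ dz = e^{−z²/2} dx ∧ dy ∧ dz`. -/
theorem jacobian_det_of_casimir_coordinates
    (p : Fin 3 → ℝ) (hp : 0 < p 0) :
    DifferentiableAt ℝ Phi p ∧
    (Matrix.of fun i j => fderiv ℝ (fun q => Phi q i) p (Pi.single j 1)).det
      = Real.exp (-(p 2) ^ 2 / 2) := by
  have hx : p 0 ≠ 0 := hp.ne'
  refine ⟨Phi.differentiableAt hx, ?_⟩
  rw [det_fin_three_of_row_two_eq _ (funext Phi.fderiv_apply_two_single)]
  simp only [of_apply]
  rw [Phi.fderiv_apply_zero_single_zero, Phi.fderiv_apply_zero_single_one,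
    Phi.fderiv_apply_one_single_zero hx, Phi.fderiv_apply_one_single_one hx]
  have hr : p 0 ^ 2 + p 1 ^ 2 ≠ 0 := by positivity
  field_simp
  ring
end

section
/- On the open set {(x,y,z) ∈ ℝ³ : x > 0}, let C = (x² + y² + z²)/2, χ = e^{−z²/2} arctan(y/x), λ = e^{z²/2}, and let π₃(x,y,z) = z. Then λ · ∇C · (∇χ × ∇π₃) = 1 at every point of this set, i.e. the Poisson bracket {χ, z} = λ ∇C · (∇χ × ∇z) built from the Poisson operator of the flow v = λ ∇C × ∇H equals 1, so (χ, z) form a canonically conjugate pair on each level surface of C. -/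
open Matrix

/-- The gradient `∇f` of a scalar function on `ℝ³`. -/
noncomputable def grad3 (f : (Fin 3 → ℝ) → ℝ) (x : Fin 3 → ℝ) : Fin 3 → ℝ :=
  fun i => fderiv ℝ f x (Pi.single i 1)

noncomputable def pr (i : Fin 3) : (Fin 3 → ℝ) →L[ℝ] ℝ := ContinuousLinearMap.proj i

lemma hproj (p : Fin 3 → ℝ) (i : Fin 3) : HasFDerivAt (fun q : Fin 3 → ℝ => q i) (pr i) p :=
  (pr i).hasFDerivAt


set_option maxHeartbeats 1000000 in
/-- On the open set `{x > 0}`, with `C = (x² + y² + z²)/2`,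
`χ = e^{−z²/2} arctan(y/x)`, `λ = e^{z²/2}` and `π₃ = z`, the Poisson bracket
`{χ, z} = λ ∇C ⋅ (∇χ × ∇z)` equals `1`: the pair `(χ, z)` is canonically
conjugate on each level surface of the Casimir `C`. -/
theorem poisson_bracket_chi_z_eq_one
    (p : Fin 3 → ℝ) (hp : 0 < p 0) :
    Real.exp ((p 2) ^ 2 / 2) *
      (grad3 (fun q => (q 0 ^ 2 + q 1 ^ 2 + q 2 ^ 2) / 2) p ⬝ᵥ
        crossProduct
          (grad3 (fun q => Real.exp (-(q 2) ^ 2 / 2) * Real.arctan (q 1 / q 0)) p)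
          (grad3 (fun q => q 2) p)) = 1 := by
  have hne : p 0 ≠ 0 := ne_of_gt hp
  have fC : (fun q : Fin 3 → ℝ => (q 0 ^ 2 + q 1 ^ 2 + q 2 ^ 2) / 2)
      = fun q => (q 0 ^ 2 + q 1 ^ 2 + q 2 ^ 2) * (2:ℝ)⁻¹ := by
    funext q; ring
  have fχ : (fun q : Fin 3 → ℝ => Real.exp (-(q 2) ^ 2 / 2) * Real.arctan (q 1 / q 0))
      = fun q => Real.exp (-q 2 ^ 2 * (2:ℝ)⁻¹) * Real.arctan (q 1 * (q 0)⁻¹) := by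
    funext q; rw [div_eq_mul_inv, div_eq_mul_inv]
  have hC := ((((hasDerivAt_pow 2 (p 0)).comp_hasFDerivAt p (hproj p 0)).add
      ((hasDerivAt_pow 2 (p 1)).comp_hasFDerivAt p (hproj p 1))).add
      ((hasDerivAt_pow 2 (p 2)).comp_hasFDerivAt p (hproj p 2))).mul_const (2:ℝ)⁻¹
  have hg := (((hasDerivAt_pow 2 (p 2)).comp_hasFDerivAt p (hproj p 2)).neg.mul_const (2:ℝ)⁻¹).exp
  have ha := ((hproj p 1).mul ((hasDerivAt_inv hne).comp_hasFDerivAt p (hproj p 0))).arctan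
  have hχ := hg.mul ha
  have hC' : HasFDerivAt (fun q : Fin 3 → ℝ => (q 0 ^ 2 + q 1 ^ 2 + q 2 ^ 2) * (2:ℝ)⁻¹) _ p := hC
  have hχ' : HasFDerivAt (fun q : Fin 3 → ℝ =>
      Real.exp (-q 2 ^ 2 * (2:ℝ)⁻¹) * Real.arctan (q 1 * (q 0)⁻¹)) _ p := hχ
  have gC : ∀ i, grad3 (fun q => (q 0 ^ 2 + q 1 ^ 2 + q 2 ^ 2) / 2) p i = p i := by
    intro i
    rw [grad3, fC, hC'.fderiv]
    fin_cases i <;> simp [pr, Pi.single_apply]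
  have gz0 : grad3 (fun q => q 2) p 0 = 0 := by
    rw [grad3, (hproj p 2).fderiv]; simp [pr, Pi.single_apply]
  have gz1 : grad3 (fun q => q 2) p 1 = 0 := by
    rw [grad3, (hproj p 2).fderiv]; simp [pr, Pi.single_apply]
  have gz2 : grad3 (fun q => q 2) p 2 = 1 := by
    rw [grad3, (hproj p 2).fderiv]; simp [pr, Pi.single_apply]
  set E := Real.exp (-p 2 ^ 2 * (2:ℝ)⁻¹) with hE
  set A := (1 + (p 1 * (p 0)⁻¹) ^ 2)⁻¹ with hA
  have gχ0 : grad3 (fun q => Real.exp (-(q 2) ^ 2 / 2) * Real.arctan (q 1 / q 0)) p 0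
      = E * (A * (p 1 * -(p 0 ^ 2)⁻¹)) := by
    rw [grad3, fχ, hχ'.fderiv]; simp [pr, Pi.single_apply, hE, hA]
  have gχ1 : grad3 (fun q => Real.exp (-(q 2) ^ 2 / 2) * Real.arctan (q 1 / q 0)) p 1
      = E * (A * (p 0)⁻¹) := by
    rw [grad3, fχ, hχ'.fderiv]; simp [pr, Pi.single_apply, hE, hA]
  have hEinv : E = (Real.exp (p 2 ^ 2 / 2))⁻¹ := by
    rw [hE, ← Real.exp_neg]; ring_nf
  have hpos : (1 : ℝ) + (p 1 * (p 0)⁻¹) ^ 2 ≠ 0 := by positivity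
  simp only [dotProduct, Fin.sum_univ_three, cross_apply]
  simp only [Matrix.cons_val_zero, Matrix.cons_val_one, Matrix.head_cons,
    Matrix.cons_val_two, Matrix.tail_cons]
  rw [gC 0, gC 1, gC 2, gz0, gz1, gz2, gχ0, gχ1, hEinv, hA]
  field_simp
  ring
end
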